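/- arXiv:quant-ph/0212109 — 2 statements merged into one kernel-verified Lean document; each statement's English description precedes it below -/
import Mathlib

section
/- Let γ ∈ [π/4, π/2], c ∈ (0, π/2], b = arccos((cos c − cos²γ)/sin²γ), p, q, U₁, U₂ as in the W-identity. Then U₁ · exp(−i(γ/2)σ_z) · exp((b+π)(i/2)σ_y) · exp(−i(γ/2)σ_z) · U₂ = exp(−i(c/2)σ_z). -/
/-!
The `σz`-exponentials are diagonal and `exp ((θ i / 2) σy)` is the real rotation by `θ / 2`, so
the Euler product in the middle is `!![-s e^{-iγ}, k; -k, -s e^{iγ}]` with `s = sin (b / 2)`,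
`k = cos (b / 2)`. Conjugating it by `U₁, U₂` gives `exp (-i (c / 2) σz)` as soon as
`s sin γ = sin (c / 2)`, `(p² - q²) s cos γ + 2 p q k = cos (c / 2)` and
`2 p q s cos γ = (p² - q²) k`. The half-angle formulas applied to
`cos b = (cos c - cos² γ) / sin² γ` give `s sin γ = sin (c / 2)` and
`(k sin γ)² = cos² (c / 2) - cos² γ`; with `p² - q² = tan (c / 2) / tan γ` the latter yields
`2 p q cos (c / 2) = k`, and the three identities follow. The ranges of `γ` and `c` keep the
argument of `arccos` in `[-1, 1]` and `tan (c / 2) / tan γ` in `[0, 1]`.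
-/

open Matrix Kronecker

noncomputable section

def σx : Matrix (Fin 2) (Fin 2) ℂ := !![0, 1; 1, 0]
def σy : Matrix (Fin 2) (Fin 2) ℂ := !![0, -Complex.I; Complex.I, 0]
def σz : Matrix (Fin 2) (Fin 2) ℂ := !![1, 0; 0, -1]

/-- matrix exponential over ℂ. -/
def mexp {n : Type*} [Fintype n] [DecidableEq n]
    (A : Matrix n n ℂ) : Matrix n n ℂ := NormedSpace.exp A

section MatrixExponentials

open Complex

lemma mexp_smul_σz (z : ℂ) : mexp (z • σz) = !![exp z, 0; 0, exp (-z)] := by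
  have hdiag : z • σz = diagonal ![z, -z] := by
    ext i j; fin_cases i <;> fin_cases j <;> simp [σz]
  rw [mexp, hdiag, exp_diagonal]
  ext i j
  fin_cases i <;> fin_cases j <;> simp [Pi.exp_def, ← exp_eq_exp_ℂ]

lemma mexp_smul_σy (z : ℂ) :
    mexp (z • σy) = !![cosh z, -I * sinh z; I * sinh z, cosh z] := by
  set V : Matrix (Fin 2) (Fin 2) ℂ := !![1, 1; I, -I]
  have hVW : V * !![1 / 2, -I / 2; 1 / 2, I / 2] = 1 := by
    ext i j
    fin_cases i <;> fin_cases j <;> simp [V, mul_apply, one_apply] <;> ring_nf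
    simp
  have hV : V⁻¹ = !![1 / 2, -I / 2; 1 / 2, I / 2] := inv_eq_right_inv hVW
  -- the columns `(1, i)`, `(1, -i)` of `V` are eigenvectors of `σy`
  have hconj : z • σy = V * (z • σz) * V⁻¹ := by
    rw [hV]; ext i j; fin_cases i <;> fin_cases j <;> simp [V, σy, σz, mul_apply] <;> ring
  rw [mexp, hconj, exp_conj V _ ((isUnit_iff_isUnit_det V).mpr (isUnit_det_of_right_inverse hVW)),
    ← mexp, mexp_smul_σz, hV, cosh, sinh]
  ext i j
  fin_cases i <;> fin_cases j <;> simp [V, mul_apply]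
  · ring
  · ring
  · ring
  · linear_combination -(exp z + exp (-z)) / 2 * I_sq

lemma mexp_neg_I_half_smul_σz (φ : ℝ) :
    mexp ((-I * ((φ : ℂ) / 2)) • σz) =
      !![exp (-((φ / 2 : ℝ) : ℂ) * I), 0; 0, exp (((φ / 2 : ℝ) : ℂ) * I)] := by
  rw [mexp_smul_σz]; push_cast; ring_nf

lemma exp_neg_ofReal_mul_I (x : ℝ) : exp (-x * I) = Real.cos x - Real.sin x * I := by
  rw [← ofReal_neg, exp_ofReal_mul_I, Real.cos_neg, Real.sin_neg, ofReal_neg, neg_mul,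
    sub_eq_add_neg]

lemma mexp_σz_mul_mexp_σy_mul_mexp_σz (φ θ : ℝ) :
    mexp ((-I * ((φ : ℂ) / 2)) • σz) * mexp (((θ : ℂ) * (I / 2)) • σy) *
        mexp ((-I * ((φ : ℂ) / 2)) • σz) =
      !![Real.cos (θ / 2) * exp (-φ * I), Real.sin (θ / 2);
        -Real.sin (θ / 2), Real.cos (θ / 2) * exp (φ * I)] := by
  have hθ : (θ : ℂ) * (I / 2) = ((θ / 2 : ℝ) : ℂ) * I := by push_cast; ring
  rw [mexp_neg_I_half_smul_σz, mexp_smul_σy, hθ, cosh_mul_I, sinh_mul_I, ← ofReal_cos,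
    ← ofReal_sin]
  have hsq : exp (-(φ / 2 * I)) * exp (-(φ / 2 * I)) = exp (-(φ * I)) := by
    rw [← exp_add]; ring_nf
  have hsq' : exp (φ / 2 * I) * exp (φ / 2 * I) = exp (φ * I) := by
    rw [← exp_add]; ring_nf
  have hinv : exp (-(φ / 2 * I)) * exp (φ / 2 * I) = 1 := by
    rw [← exp_add, neg_add_cancel, exp_zero]
  ext i j; fin_cases i <;> fin_cases j <;> simp [mul_apply]
  · linear_combination cos (θ / 2 : ℂ) * hsq
  · linear_combination (-(I * I) * sin (θ / 2 : ℂ)) * hinv - sin (θ / 2 : ℂ) * I_mul_I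
  · linear_combination ((I * I) * sin (θ / 2 : ℂ)) * hinv + sin (θ / 2 : ℂ) * I_mul_I
  · linear_combination cos (θ / 2 : ℂ) * hsq'

lemma conj_eq_diag_exp {p q s k φ ψ : ℝ} (hpq : p ^ 2 + q ^ 2 = 1)
    (hsin : s * Real.sin φ = Real.sin ψ)
    (hcos : (p ^ 2 - q ^ 2) * Real.cos φ * s + 2 * p * q * k = Real.cos ψ)
    (hoff : 2 * p * q * Real.cos φ * s = (p ^ 2 - q ^ 2) * k) :
    !![I * p, I * q; -q, p] * !![-s * exp (-φ * I), k; -k, -s * exp (φ * I)] *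
        !![I * p, -q; -I * q, -p] =
      !![exp (-ψ * I), 0; 0, exp (ψ * I)] := by
  simp only [exp_neg_ofReal_mul_I, exp_ofReal_mul_I]
  ext i j
  fin_cases i <;> fin_cases j <;> simp [mul_apply, Complex.ext_iff, -ofReal_cos, -ofReal_sin]
  · exact ⟨by linear_combination hcos, by linear_combination -(s * Real.sin φ) * hpq - hsin⟩
  · exact ⟨by ring, by linear_combination hoff⟩
  · exact ⟨by ring, by linear_combination hoff⟩
  · exact ⟨by linear_combination hcos, by linear_combination s * Real.sin φ * hpq + hsin⟩

end MatrixExponentials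

section Trigonometry

open Real Set

lemma cos_sq_half (x : ℝ) : cos (x / 2) ^ 2 = 1 / 2 + cos x / 2 := by
  rw [cos_sq, mul_div_cancel₀ x two_ne_zero]

lemma tan_div_tan_mul_cos_mul_sin {x y : ℝ} (hx : cos x ≠ 0) (hy : sin y ≠ 0) :
    tan x / tan y * (cos x * sin y) = sin x * cos y := by
  rcases eq_or_ne (cos y) 0 with hy' | hy'
  · simp [tan_eq_sin_div_cos, hy']
  · rw [tan_eq_sin_div_cos, tan_eq_sin_div_cos]; field_simp

lemma cos_arccos_mul_sin_sq {γ c : ℝ} (hγ : 0 < sin γ)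
    (hcγ : cos γ ^ 2 ≤ cos (c / 2) ^ 2) :
    cos (arccos ((cos c - cos γ ^ 2) / sin γ ^ 2)) * sin γ ^ 2 = cos c - cos γ ^ 2 := by
  have hS : 0 < sin γ ^ 2 := by positivity
  have := sin_sq_add_cos_sq γ
  have := cos_sq_half c
  rw [cos_arccos, div_mul_cancel₀ _ hS.ne']
  · rw [le_div_iff₀ hS]; linarith
  · rw [div_le_one hS]; linarith [cos_le_one c]

lemma sin_half_mul_sin_eq_sin_half {b c γ : ℝ} (hb : b ∈ Icc 0 π)
    (hcos : cos b * sin γ ^ 2 = cos c - cos γ ^ 2) (hγ : 0 ≤ sin γ) (hc : 0 ≤ sin (c / 2)) :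
    sin (b / 2) * sin γ = sin (c / 2) := by
  have hs : 0 ≤ sin (b / 2) :=
    sin_nonneg_of_nonneg_of_le_pi (by linarith [hb.1]) (by linarith [hb.2, pi_pos])
  refine (pow_left_inj₀ (mul_nonneg hs hγ) hc two_ne_zero).mp ?_
  linear_combination -(sin γ ^ 2 * cos_sq_half b) + cos_sq_half c - hcos / 2
    + sin_sq_add_cos_sq γ / 2 + sin γ ^ 2 * sin_sq_add_cos_sq (b / 2) - sin_sq_add_cos_sq (c / 2)

lemma sq_cos_half_mul_sin {b c γ : ℝ} (hcos : cos b * sin γ ^ 2 = cos c - cos γ ^ 2) :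
    (cos (b / 2) * sin γ) ^ 2 = cos (c / 2) ^ 2 - cos γ ^ 2 := by
  linear_combination sin γ ^ 2 * cos_sq_half b - cos_sq_half c + hcos / 2
    + sin_sq_add_cos_sq γ / 2

lemma two_mul_mul_cos_half_eq_cos_half {b c γ p q t : ℝ} (hS : 0 < sin γ)
    (hκ : 0 ≤ cos (c / 2)) (hk : 0 ≤ cos (b / 2)) (hp₀ : 0 ≤ p) (hq₀ : 0 ≤ q)
    (hp2 : p ^ 2 = (1 + t) / 2) (hq2 : q ^ 2 = (1 - t) / 2)
    (hT : t * (cos (c / 2) * sin γ) = sin (c / 2) * cos γ)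
    (hcos : cos b * sin γ ^ 2 = cos c - cos γ ^ 2) :
    2 * p * q * cos (c / 2) = cos (b / 2) := by
  refine mul_right_cancel₀ hS.ne' ((pow_left_inj₀ (by positivity) (mul_nonneg hk hS.le)
    two_ne_zero).mp ?_)
  rw [sq_cos_half_mul_sin hcos]
  linear_combination 4 * cos (c / 2) ^ 2 * sin γ ^ 2 * q ^ 2 * hp2
    + 2 * cos (c / 2) ^ 2 * sin γ ^ 2 * (1 + t) * hq2
    - (t * cos (c / 2) * sin γ + sin (c / 2) * cos γ) * hT
    + cos (c / 2) ^ 2 * sin_sq_add_cos_sq γ - cos γ ^ 2 * sin_sq_add_cos_sq (c / 2)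

lemma euler_angle_identities {γ c b p q : ℝ} (hγ : γ ∈ Icc (π / 4) (π / 2))
    (hc : c ∈ Ioc 0 (π / 2)) (hb : b = arccos ((cos c - cos γ ^ 2) / sin γ ^ 2))
    (hp : p = √((1 + tan (c / 2) / tan γ) / 2)) (hq : q = √((1 - tan (c / 2) / tan γ) / 2)) :
    p ^ 2 + q ^ 2 = 1 ∧ sin (b / 2) * sin γ = sin (c / 2) ∧
      (p ^ 2 - q ^ 2) * cos γ * sin (b / 2) + 2 * p * q * cos (b / 2) = cos (c / 2) ∧
      2 * p * q * cos γ * sin (b / 2) = (p ^ 2 - q ^ 2) * cos (b / 2) := by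
  obtain ⟨hγ₁, hγ₂⟩ := hγ
  obtain ⟨hc₁, hc₂⟩ := hc
  have hπ := pi_pos
  have hS : 0 < sin γ := sin_pos_of_pos_of_lt_pi (by linarith) (by linarith)
  have hC : 0 ≤ cos γ := cos_nonneg_of_mem_Icc ⟨by linarith, hγ₂⟩
  have hσ : 0 ≤ sin (c / 2) := sin_nonneg_of_nonneg_of_le_pi (by linarith) (by linarith)
  have hκ : 0 < cos (c / 2) := cos_pos_of_mem_Ioo ⟨by linarith, by linarith⟩
  have hCκ : cos γ ≤ cos (c / 2) :=
    cos_le_cos_of_nonneg_of_le_pi (by linarith) (by linarith) (by linarith)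
  have hσκ : sin (c / 2) * cos γ ≤ cos (c / 2) * sin γ := by
    have := sin_nonpos_of_nonpos_of_neg_pi_le (x := c / 2 - γ) (by linarith) (by linarith)
    rw [sin_sub] at this; linarith
  set t := tan (c / 2) / tan γ
  have hT : t * (cos (c / 2) * sin γ) = sin (c / 2) * cos γ :=
    tan_div_tan_mul_cos_mul_sin hκ.ne' hS.ne'
  have hκS : 0 < cos (c / 2) * sin γ := mul_pos hκ hS
  have ht₀ : 0 ≤ t := nonneg_of_mul_nonneg_left (hT ▸ mul_nonneg hσ hC) hκS
  have ht₁ : t ≤ 1 := le_of_mul_le_mul_right (by linarith) hκS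
  have hp2 : p ^ 2 = (1 + t) / 2 := by rw [hp, sq_sqrt (by linarith)]
  have hq2 : q ^ 2 = (1 - t) / 2 := by rw [hq, sq_sqrt (by linarith)]
  have hcos : cos b * sin γ ^ 2 = cos c - cos γ ^ 2 :=
    hb ▸ cos_arccos_mul_sin_sq hS (pow_le_pow_left₀ hC hCκ 2)
  have hbπ : b ∈ Icc 0 π := hb ▸ ⟨arccos_nonneg _, arccos_le_pi _⟩
  have hsin := sin_half_mul_sin_eq_sin_half hbπ hcos hS.le hσ
  have hk : 0 ≤ cos (b / 2) :=
    cos_nonneg_of_mem_Icc ⟨by linarith [hbπ.1], by linarith [hbπ.2]⟩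
  have hpq := two_mul_mul_cos_half_eq_cos_half hS hκ.le hk (hp ▸ sqrt_nonneg _)
    (hq ▸ sqrt_nonneg _) hp2 hq2 hT hcos
  refine ⟨by rw [hp2, hq2]; ring, hsin, ?_, ?_⟩
  · refine mul_right_cancel₀ (mul_pos hκ (pow_pos hS 2)).ne' ?_
    linear_combination cos γ * sin (b / 2) * cos (c / 2) * sin γ ^ 2 * (hp2 - hq2)
      + cos γ * sin (b / 2) * sin γ * hT + sin (c / 2) * cos γ ^ 2 * hsin
      + cos (b / 2) * sin γ ^ 2 * hpq + sq_cos_half_mul_sin hcos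
      + cos γ ^ 2 * sin_sq_add_cos_sq (c / 2) - cos (c / 2) ^ 2 * sin_sq_add_cos_sq γ
  · refine mul_right_cancel₀ hκS.ne' ?_
    linear_combination cos γ * sin (b / 2) * sin γ * hpq + cos (b / 2) * cos γ * hsin
      - cos (b / 2) * cos (c / 2) * sin γ * (hp2 - hq2) - cos (b / 2) * hT

end Trigonometry

theorem stmt13 (γ c : ℝ) (hγ : γ ∈ Set.Icc (Real.pi / 4) (Real.pi / 2))
    (hc : c ∈ Set.Ioc 0 (Real.pi / 2))
    (b p q : ℝ)
    (hb : b = Real.arccos ((Real.cos c - (Real.cos γ) ^ 2) / (Real.sin γ) ^ 2))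
    (hp : p = Real.sqrt ((1 + Real.tan (c / 2) / Real.tan γ) / 2))
    (hq : q = Real.sqrt ((1 - Real.tan (c / 2) / Real.tan γ) / 2))
    (U₁ U₂ : Matrix (Fin 2) (Fin 2) ℂ)
    (hU₁ : U₁ = !![Complex.I * p, Complex.I * q; -q, p])
    (hU₂ : U₂ = !![Complex.I * p, -q; -Complex.I * q, -p]) :
    U₁ * mexp ((-Complex.I * ((γ : ℂ) / 2)) • σz) *
        mexp ((((b + Real.pi : ℝ) : ℂ) * (Complex.I / 2)) • σy) *
        mexp ((-Complex.I * ((γ : ℂ) / 2)) • σz) * U₂ =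
      mexp ((-Complex.I * ((c : ℂ) / 2)) • σz) := by
  obtain ⟨hpq, hsin, hcos, hoff⟩ := euler_angle_identities hγ hc hb hp hq
  have hcos_half : Real.cos ((b + Real.pi) / 2) = -Real.sin (b / 2) := by
    rw [add_div, Real.cos_add_pi_div_two]
  have hsin_half : Real.sin ((b + Real.pi) / 2) = Real.cos (b / 2) := by
    rw [add_div, Real.sin_add_pi_div_two]
  calc _ = U₁ * (mexp ((-Complex.I * ((γ : ℂ) / 2)) • σz) *
          mexp ((((b + Real.pi : ℝ) : ℂ) * (Complex.I / 2)) • σy) *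
          mexp ((-Complex.I * ((γ : ℂ) / 2)) • σz)) * U₂ := by simp only [Matrix.mul_assoc]
    _ = _ := by
      rw [mexp_σz_mul_mexp_σy_mul_mexp_σz, hcos_half, hsin_half, hU₁, hU₂,
        Complex.ofReal_neg, conj_eq_diag_exp hpq hsin hcos hoff, mexp_neg_I_half_smul_σz]
end
end

section
/- In the special case γ = π/2 of the two-application circuit, b = c, p = q = 1/√2, and the identity becomes: (I⊗U₁)·exp((π/2)(i/2)σ_z⊗σ_z)·(I⊗exp((c+π)(i/2)σ_y))·exp((π/2)(i/2)σ_z⊗σ_z)·(I⊗U₂) = exp(c(i/2)σ_z⊗σ_z), where U₁ = (1/√2)[[i, i], [−1, 1]] and U₂ = (1/√2)[[i, −1], [−i, −1]], for all c ∈ (0, π/2]. -/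
open Matrix Kronecker

noncomputable section

/-!
Every gate of the circuit is block diagonal with respect to the first qubit: `1 ⊗ U` acts as `U`
in both blocks, and `exp (a • σz ⊗ σz)` acts as `exp (a • Z)` with `Z = σz` in one block and
`Z = -σz` in the other. So the identity splits into one 2×2 identity for each such `Z`.
There, with `D = exp (iπ/4 • Z)`, the anticommutation of `Z` and `σy` gives `D σy D = σy`, and
`D² = i • Z`; hence `D exp (y • σy) D = (i cosh y) • Z + sinh y • σy`. The map `M ↦ U₁ M U₂`
sends `Z ↦ -Z` and `σy ↦ -i`, and for `y = x + iπ/2` we have `cosh y = i sinh x`, `sinh y = i cosh x`,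
which leaves `cosh x • 1 + sinh x • Z = exp (x • Z)`.
-/

open Complex

section Controlled

variable {o n α : Type*} [DecidableEq o]

/-- The block matrix with blocks `v i` along the diagonal, the block index being the *first*
coordinate, as for the first tensor factor of `⊗ₖ`. -/
def controlled [Zero α] (v : o → Matrix n n α) : Matrix (o × n) (o × n) α :=
  reindex (Equiv.prodComm n o) (Equiv.prodComm n o) (blockDiagonal v)

theorem controlled_mul [Fintype o] [Fintype n] [NonUnitalNonAssocSemiring α]
    (v w : o → Matrix n n α) : controlled v * controlled w = controlled (v * w) := by
  rw [controlled, controlled, reindex_apply, reindex_apply, submatrix_mul_equiv,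
    ← blockDiagonal_mul]
  rfl

theorem smul_controlled {R : Type*} [Zero α] [SMulZeroClass R α] (a : R) (v : o → Matrix n n α) :
    a • controlled v = controlled (a • v) := by
  rw [controlled, controlled, blockDiagonal_smul]
  rfl

theorem one_kronecker_eq_controlled [MulZeroOneClass α] (B : Matrix n n α) :
    (1 : Matrix o o α) ⊗ₖ B = controlled fun _ => B := by
  rw [← diagonal_one, diagonal_kronecker]
  congr
  ext
  exact one_mul _

open NormedSpace in
theorem Matrix.exp_reindex {m 𝔸 : Type*} [Fintype m] [DecidableEq m] [Fintype n] [DecidableEq n]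
    [Ring 𝔸] [TopologicalSpace 𝔸] [IsTopologicalRing 𝔸] [T2Space 𝔸] [Algebra ℚ 𝔸]
    (e : m ≃ n) (M : Matrix m m 𝔸) : exp (reindex e e M) = reindex e e (exp M) := by
  let f := reindexAlgEquiv ℚ 𝔸 e
  have hf : Continuous f := continuous_id.matrix_reindex e e
  have hf' : Continuous f.symm := continuous_id.matrix_reindex e.symm e.symm
  change exp (f M) = f (exp M)
  simp only [exp_eq_tsum_rat, Function.LeftInverse.map_tsum _ hf hf' f.left_inv, map_smul,
    map_pow]

open NormedSpace in
theorem exp_controlled {𝔸 : Type*} [Fintype o] [Fintype n] [DecidableEq n] [Ring 𝔸]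
    [TopologicalSpace 𝔸] [IsTopologicalRing 𝔸] [T2Space 𝔸] [Algebra ℚ 𝔸]
    (v : o → Matrix n n 𝔸) : exp (controlled v) = controlled (exp v) := by
  rw [controlled, controlled, exp_reindex, exp_blockDiagonal]

end Controlled

theorem σz_eq_diagonal : σz = diagonal ![1, -1] := by
  ext i j
  fin_cases i <;> fin_cases j <;> simp [σz]

theorem σy_mul_σy : σy * σy = 1 := by
  ext i j
  fin_cases i <;> fin_cases j <;> simp [σy, mul_apply]

theorem σy_mul_σz_mul_σy : σy * σz * σy = -σz := by
  ext i j
  fin_cases i <;> fin_cases j <;> simp [σy, σz, mul_apply]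

theorem σz_kronecker_σz : σz ⊗ₖ σz = controlled ![σz, -σz] := by
  calc σz ⊗ₖ σz = diagonal ![1, -1] ⊗ₖ σz := by rw [← σz_eq_diagonal]
    _ = controlled fun i => ![1, -1] i • σz := diagonal_kronecker _ _
    _ = controlled ![σz, -σz] := by
      congr 1
      funext i
      fin_cases i <;> simp

theorem mexp_smul_σz_kronecker_σz (a : ℂ) :
    mexp (a • (σz ⊗ₖ σz)) = controlled fun i => mexp (a • ![σz, -σz] i) := by
  rw [σz_kronecker_σz, smul_controlled, mexp, exp_controlled]
  congr 1
  funext i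
  -- evaluating an exponential in a product type needs a normed structure on the factors
  open scoped Matrix.Norms.Operator in exact Pi.coe_exp _ i

theorem mexp_smul_σz_s15 (a : ℂ) : mexp (a • σz) = cosh a • 1 + sinh a • σz := by
  rw [mexp, σz_eq_diagonal, ← diagonal_smul, exp_diagonal]
  ext i j
  fin_cases i <;> fin_cases j <;> simp [Pi.coe_exp, ← exp_eq_exp_ℂ, cosh_add_sinh,
    ← sub_eq_add_neg, cosh_sub_sinh]

theorem mexp_smul_of_mul_eq_mul_σz {P V : Matrix (Fin 2) (Fin 2) ℂ} (hV : IsUnit V)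
    (hPV : P * V = V * σz) (a : ℂ) : mexp (a • P) = cosh a • 1 + sinh a • P := by
  have hdet : IsUnit V.det := (isUnit_iff_isUnit_det V).mp hV
  have hP : P = V * σz * V⁻¹ := by rw [← hPV, mul_nonsing_inv_cancel_right _ _ hdet]
  rw [hP, ← smul_mul_assoc, ← mul_smul_comm, mexp, exp_conj _ _ hV, ← mexp, mexp_smul_σz_s15]
  simp only [mul_add, add_mul, mul_smul_comm, smul_mul_assoc, mul_one, mul_nonsing_inv _ hdet]

theorem mexp_smul_neg_σz (a : ℂ) : mexp (a • -σz) = cosh a • 1 + sinh a • -σz := by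
  refine mexp_smul_of_mul_eq_mul_σz (V := σx) ?_ ?_ a
  · rw [isUnit_iff_isUnit_det]
    simp [σx, det_fin_two]
  · ext i j
    fin_cases i <;> fin_cases j <;> simp [σx, σz, mul_apply]

theorem mexp_smul_σy_s15 (a : ℂ) : mexp (a • σy) = cosh a • 1 + sinh a • σy := by
  refine mexp_smul_of_mul_eq_mul_σz (V := !![1, 1; I, -I]) ?_ ?_ a
  · rw [isUnit_iff_isUnit_det]
    simp only [det_fin_two_of, mul_neg, one_mul, isUnit_iff_ne_zero]
    intro h
    have := congrArg im h
    norm_num at this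
  · ext i j
    fin_cases i <;> fin_cases j <;> simp [σy, σz, mul_apply]

theorem mexp_smul_mul_σy_mul_mexp_smul {Z : Matrix (Fin 2) (Fin 2) ℂ}
    (hZ : σy * Z * σy = -Z) (b : ℂ) : mexp (b • Z) * σy * mexp (b • Z) = σy := by
  have hσy : σy⁻¹ = σy := inv_eq_left_inv σy_mul_σy
  have hconj : σy * mexp (b • Z) * σy = mexp (-b • Z) := by
    have := exp_conj σy (b • Z)
      ((isUnit_iff_isUnit_det σy).mpr (isUnit_det_of_right_inverse σy_mul_σy))
    rw [hσy, mul_smul_comm, smul_mul_assoc, hZ, smul_neg, ← neg_smul] at this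
    exact this.symm
  calc mexp (b • Z) * σy * mexp (b • Z)
      = σy * (σy * mexp (b • Z) * σy) * mexp (b • Z) := by
        rw [← mul_assoc, ← mul_assoc, σy_mul_σy, one_mul]
    _ = σy * (mexp (-b • Z) * mexp (b • Z)) := by rw [hconj, mul_assoc]
    _ = σy := by
      rw [mexp, mexp, ← exp_add_of_commute _ _ (((Commute.refl Z).smul_left _).smul_right _),
        neg_smul, neg_add_cancel, NormedSpace.exp_zero, mul_one]

def gateU₁ : Matrix (Fin 2) (Fin 2) ℂ := (1 / Real.sqrt 2 : ℂ) • !![I, I; -1, 1]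

def gateU₂ : Matrix (Fin 2) (Fin 2) ℂ := (1 / Real.sqrt 2 : ℂ) • !![I, -1; -I, -1]

theorem gateU₁_mul_mul_gateU₂ (M : Matrix (Fin 2) (Fin 2) ℂ) :
    gateU₁ * M * gateU₂ = (1 / 2 : ℂ) • (!![I, I; -1, 1] * M * !![I, -1; -I, -1]) := by
  have h : (1 / Real.sqrt 2 : ℂ) * (1 / Real.sqrt 2) = 1 / 2 := by
    rw [div_mul_div_comm, one_mul, ← ofReal_mul, Real.mul_self_sqrt zero_le_two, ofReal_ofNat]
  rw [gateU₁, gateU₂]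
  simp only [smul_mul_assoc, mul_smul_comm, smul_smul, h]

theorem gateU₁_mul_σz_mul_gateU₂ : gateU₁ * σz * gateU₂ = -σz := by
  rw [gateU₁_mul_mul_gateU₂]
  ext i j
  fin_cases i <;> fin_cases j <;> simp [σz] <;> ring

theorem gateU₁_mul_σy_mul_gateU₂ : gateU₁ * σy * gateU₂ = -I • 1 := by
  rw [gateU₁_mul_mul_gateU₂]
  ext i j
  fin_cases i <;> fin_cases j <;> simp [σy] <;> ring

theorem cosh_pi_div_two_mul_I : cosh (((Real.pi / 2 : ℝ) : ℂ) * I) = 0 := by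
  rw [cosh_mul_I, ← ofReal_cos, Real.cos_pi_div_two, ofReal_zero]

theorem sinh_pi_div_two_mul_I : sinh (((Real.pi / 2 : ℝ) : ℂ) * I) = I := by
  rw [sinh_mul_I, ← ofReal_sin, Real.sin_pi_div_two, ofReal_one, one_mul]

theorem two_gate_circuit_eq_mexp {Z U₁ U₂ : Matrix (Fin 2) (Fin 2) ℂ}
    (hZ : ∀ a : ℂ, mexp (a • Z) = cosh a • 1 + sinh a • Z) (hσyZ : σy * Z * σy = -Z)
    (hUZ : U₁ * Z * U₂ = -Z) (hUσy : U₁ * σy * U₂ = -I • 1) (x : ℂ) :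
    U₁ * mexp ((((Real.pi / 2 : ℝ) : ℂ) * (I / 2)) • Z) *
        mexp ((x + ((Real.pi / 2 : ℝ) : ℂ) * I) • σy) *
        mexp ((((Real.pi / 2 : ℝ) : ℂ) * (I / 2)) • Z) * U₂ = mexp (x • Z) := by
  set b : ℂ := ((Real.pi / 2 : ℝ) : ℂ) * (I / 2)
  set y : ℂ := x + ((Real.pi / 2 : ℝ) : ℂ) * I
  have hD : mexp (b • Z) * mexp (b • Z) = I • Z := by
    rw [mexp, ← exp_add_of_commute _ _ (Commute.refl _), ← add_smul, ← mexp, hZ,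
      show b + b = ((Real.pi / 2 : ℝ) : ℂ) * I by ring, cosh_pi_div_two_mul_I,
      sinh_pi_div_two_mul_I, zero_smul, zero_add]
  have hDYD : mexp (b • Z) * mexp (y • σy) * mexp (b • Z) = (cosh y * I) • Z + sinh y • σy := by
    rw [mexp_smul_σy_s15]
    simp only [mul_add, add_mul, smul_mul_assoc, mul_smul_comm, mul_one, hD,
      mexp_smul_mul_σy_mul_mexp_smul hσyZ, smul_smul]
  have hcosh : cosh y = I * sinh x := by
    rw [cosh_add, cosh_pi_div_two_mul_I, sinh_pi_div_two_mul_I]; ring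
  have hsinh : sinh y = I * cosh x := by
    rw [sinh_add, cosh_pi_div_two_mul_I, sinh_pi_div_two_mul_I]; ring
  calc U₁ * mexp (b • Z) * mexp (y • σy) * mexp (b • Z) * U₂
      = U₁ * (mexp (b • Z) * mexp (y • σy) * mexp (b • Z)) * U₂ := by simp only [mul_assoc]
    _ = (-(cosh y * I)) • Z + (sinh y * -I) • 1 := by
      rw [hDYD, mul_add, add_mul, mul_smul_comm, smul_mul_assoc, mul_smul_comm, smul_mul_assoc,
        hUZ, hUσy, smul_neg, smul_smul, neg_smul]
    _ = mexp (x • Z) := by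
      rw [hZ, hcosh, hsinh, add_comm]
      congr 2
      · linear_combination -cosh x * I_mul_I
      · linear_combination -sinh x * I_mul_I

theorem stmt15_general (c : ℝ)
    (U₁ U₂ : Matrix (Fin 2) (Fin 2) ℂ)
    (hU₁ : U₁ = (1 / Real.sqrt 2 : ℂ) • !![Complex.I, Complex.I; -1, 1])
    (hU₂ : U₂ = (1 / Real.sqrt 2 : ℂ) • !![Complex.I, -1; -Complex.I, -1]) :
    ((1 : Matrix (Fin 2) (Fin 2) ℂ) ⊗ₖ U₁) *
        mexp ((((Real.pi / 2 : ℝ) : ℂ) * (Complex.I / 2)) • (σz ⊗ₖ σz)) *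
        ((1 : Matrix (Fin 2) (Fin 2) ℂ) ⊗ₖ
          mexp ((((c + Real.pi : ℝ) : ℂ) * (Complex.I / 2)) • σy)) *
        mexp ((((Real.pi / 2 : ℝ) : ℂ) * (Complex.I / 2)) • (σz ⊗ₖ σz)) *
        ((1 : Matrix (Fin 2) (Fin 2) ℂ) ⊗ₖ U₂) =
      mexp (((c : ℂ) * (Complex.I / 2)) • (σz ⊗ₖ σz)) := by
  obtain rfl : U₁ = gateU₁ := hU₁
  obtain rfl : U₂ = gateU₂ := hU₂
  rw [show ((c + Real.pi : ℝ) : ℂ) * (I / 2) = c * (I / 2) + ((Real.pi / 2 : ℝ) : ℂ) * I by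
    push_cast; ring]
  simp only [mexp_smul_σz_kronecker_σz, one_kronecker_eq_controlled, controlled_mul]
  congr 1
  funext i
  fin_cases i
  · exact two_gate_circuit_eq_mexp mexp_smul_σz_s15 σy_mul_σz_mul_σy
      gateU₁_mul_σz_mul_gateU₂ gateU₁_mul_σy_mul_gateU₂ _
  · exact two_gate_circuit_eq_mexp mexp_smul_neg_σz
      (by rw [mul_neg, neg_mul, σy_mul_σz_mul_σy])
      (by rw [mul_neg, neg_mul, gateU₁_mul_σz_mul_gateU₂]) gateU₁_mul_σy_mul_gateU₂ _

theorem stmt15 (c : ℝ) (hc : c ∈ Set.Ioc 0 (Real.pi / 2))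
    (U₁ U₂ : Matrix (Fin 2) (Fin 2) ℂ)
    (hU₁ : U₁ = (1 / Real.sqrt 2 : ℂ) • !![Complex.I, Complex.I; -1, 1])
    (hU₂ : U₂ = (1 / Real.sqrt 2 : ℂ) • !![Complex.I, -1; -Complex.I, -1]) :
    ((1 : Matrix (Fin 2) (Fin 2) ℂ) ⊗ₖ U₁) *
        mexp ((((Real.pi / 2 : ℝ) : ℂ) * (Complex.I / 2)) • (σz ⊗ₖ σz)) *
        ((1 : Matrix (Fin 2) (Fin 2) ℂ) ⊗ₖ
          mexp ((((c + Real.pi : ℝ) : ℂ) * (Complex.I / 2)) • σy)) *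
        mexp ((((Real.pi / 2 : ℝ) : ℂ) * (Complex.I / 2)) • (σz ⊗ₖ σz)) *
        ((1 : Matrix (Fin 2) (Fin 2) ℂ) ⊗ₖ U₂) =
      mexp (((c : ℂ) * (Complex.I / 2)) • (σz ⊗ₖ σz)) :=
  stmt15_general c U₁ U₂ hU₁ hU₂

end
end
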